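/- (Uniform interpolation for K_nD, D_nD, T_nD) Each of the distributed knowledge modal systems K_nD, D_nD, and T_nD has the uniform interpolation property. Moreover, for L among these systems, every L-satisfiable formula φ over a finite atom set P and every p ∈ P, the formula ⋁{δ^p : δ ∈ D^P_{dep(φ)}(L) and δ ⊨_L φ} is a uniform interpolant of φ in L over P∖{p}. -/

import Mathlib

/-!
Common framework: multi-agent epistemic modal logic with distributed knowledge.
Agents are `Fin n`, atoms are natural numbers.
-/

namespace DKLogic

/-- Formulas of the language `L_D`: atoms, negation, conjunction, disjunction and the
distributed-knowledge modality `D_B` for nonempty sets `B` of agents (together with the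
constants `⊤`/`⊥`, which the paper uses as the empty conjunction/disjunction). -/
inductive Formula (n : ℕ) : Type
  | top : Formula n
  | bot : Formula n
  | atom : ℕ → Formula n
  | neg : Formula n → Formula n
  | and : Formula n → Formula n → Formula n
  | or : Formula n → Formula n → Formula n
  | D : {B : Finset (Fin n) // B.Nonempty} → Formula n → Formula n

namespace Formula

/-- Modal depth of a formula. -/
def depth {n : ℕ} : Formula n → ℕ
  | top => 0
  | bot => 0
  | atom _ => 0
  | neg φ => depth φ
  | and φ ψ => max (depth φ) (depth ψ)
  | or φ ψ => max (depth φ) (depth ψ)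
  | D _ φ => depth φ + 1

/-- The atoms occurring in a formula. -/
def atoms {n : ℕ} : Formula n → Finset ℕ
  | top => ∅
  | bot => ∅
  | atom q => {q}
  | neg φ => atoms φ
  | and φ ψ => atoms φ ∪ atoms ψ
  | or φ ψ => atoms φ ∪ atoms ψ
  | D _ φ => atoms φ

end Formula

/-- A Kripke model over world type `W` with `n` agents. -/
structure KModel (n : ℕ) (W : Type) where
  R : Fin n → W → W → Prop
  V : W → Set ℕ

/-- The distributed accessibility relation `R_B = ⋂_{i ∈ B} R_i`. -/
def KModel.RB {n : ℕ} {W : Type} (M : KModel n W) (B : Finset (Fin n)) (s t : W) : Prop :=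
  ∀ i ∈ B, M.R i s t

/-- Satisfaction. -/
def Sat {n : ℕ} {W : Type} (M : KModel n W) : W → Formula n → Prop
  | _, .top => True
  | _, .bot => False
  | s, .atom q => q ∈ M.V s
  | s, .neg φ => ¬ Sat M s φ
  | s, .and φ ψ => Sat M s φ ∧ Sat M s ψ
  | s, .or φ ψ => Sat M s φ ∨ Sat M s ψ
  | s, .D B φ => ∀ t : W, M.RB B.1 s t → Sat M t φ

/-- Seriality of a relation. -/
def Serial {W : Type} (R : W → W → Prop) : Prop := ∀ x, ∃ y, R x y

/-- Euclideanness of a relation. -/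
def Euclidean {W : Type} (R : W → W → Prop) : Prop := ∀ x y z, R x y → R x z → R y z

/-- The six modal systems. -/
inductive MSys : Type
  | K | D | T | K45 | KD45 | S5

/-- `L`-models: frame conditions on each accessibility relation for each system. -/
def IsModel {n : ℕ} {W : Type} : MSys → KModel n W → Prop
  | .K, _ => True
  | .D, M => ∀ i, Serial (M.R i)
  | .T, M => ∀ i, Reflexive (M.R i)
  | .K45, M => ∀ i, Transitive (M.R i) ∧ Euclidean (M.R i)
  | .KD45, M => ∀ i, Serial (M.R i) ∧ Transitive (M.R i) ∧ Euclidean (M.R i)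
  | .S5, M => ∀ i, Reflexive (M.R i) ∧ Transitive (M.R i) ∧ Euclidean (M.R i)

/-- Semantic consequence over `L`-models. -/
def Entails {n : ℕ} (L : MSys) (φ ψ : Formula n) : Prop :=
  ∀ (W : Type) (M : KModel n W), IsModel L M → ∀ s : W, Sat M s φ → Sat M s ψ

/-- Semantic equivalence over `L`-models. -/
def EquivL {n : ℕ} (L : MSys) (φ ψ : Formula n) : Prop :=
  Entails L φ ψ ∧ Entails L ψ φ

/-- `L`-satisfiability. -/
def SatL {n : ℕ} (L : MSys) (φ : Formula n) : Prop :=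
  ∃ (W : Type) (M : KModel n W) (s : W), IsModel L M ∧ Sat M s φ

/-- Collective `p`-bisimulation between two pointed models. -/
def CollPBisim {n : ℕ} {W W' : Type} (M : KModel n W) (s : W) (M' : KModel n W') (s' : W')
    (p : ℕ) : Prop :=
  ∃ ρ : W → W' → Prop, ρ s s' ∧
    ∀ u u', ρ u u' →
      ((∀ q : ℕ, q ≠ p → (q ∈ M.V u ↔ q ∈ M'.V u')) ∧
       (∀ B : Finset (Fin n), B.Nonempty → ∀ v, M.RB B u v → ∃ v', M'.RB B u' v' ∧ ρ v v') ∧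
       (∀ B : Finset (Fin n), B.Nonempty → ∀ v', M'.RB B u' v' → ∃ v, M.RB B u v ∧ ρ v v'))

/-- `ψ` is a result of forgetting `p` in `φ` in system `L`
(written `dforget_L(φ,p) ≡_L ψ` in the paper). -/
def IsForget {n : ℕ} (L : MSys) (φ : Formula n) (p : ℕ) (ψ : Formula n) : Prop :=
  ψ.atoms ⊆ φ.atoms.erase p ∧
  (∀ (W W' : Type) (M : KModel n W) (M' : KModel n W') (s : W) (s' : W'),
      IsModel L M → IsModel L M' → Sat M s φ → CollPBisim M s M' s' p → Sat M' s' ψ) ∧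
  (∀ (W' : Type) (M' : KModel n W') (s' : W'),
      IsModel L M' → Sat M' s' ψ →
      ∃ (W : Type) (M : KModel n W) (s : W), IsModel L M ∧ Sat M s φ ∧ CollPBisim M s M' s' p)

/-- `L` is closed under forgetting: `dforget_L(φ,p)` exists (as an `L`-satisfiable formula)
for every `L`-satisfiable `φ` and every atom `p`. -/
def ClosedUnderForgetting {n : ℕ} (L : MSys) : Prop :=
  ∀ (φ : Formula n) (p : ℕ), SatL L φ → ∃ ψ : Formula n, SatL L ψ ∧ IsForget L φ p ψ

/-- `ψ` is a uniform interpolant of `φ` in `L` over `P \ {p}`. -/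
def IsUI {n : ℕ} (L : MSys) (P : Finset ℕ) (p : ℕ) (φ ψ : Formula n) : Prop :=
  SatL L ψ ∧ ψ.atoms ⊆ P.erase p ∧
  ∀ χ : Formula n, p ∉ χ.atoms → (Entails L φ χ ↔ Entails L ψ χ)

/-- The uniform interpolation property for the system `L`. -/
def HasUIP {n : ℕ} (L : MSys) : Prop :=
  ∀ (P : Finset ℕ) (p : ℕ) (φ : Formula n),
    p ∈ P → φ.atoms ⊆ P → SatL L φ → ∃ ψ : Formula n, IsUI L P p φ ψ

/-! ### Canonical formulas -/

/-- Big conjunction of a list of formulas (`⊤` for the empty list). -/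
def bigAnd {n : ℕ} : List (Formula n) → Formula n
  | [] => .top
  | φ :: l => .and φ (bigAnd l)

/-- Big disjunction of a list of formulas (`⊥` for the empty list). -/
def bigOr {n : ℕ} : List (Formula n) → Formula n
  | [] => .bot
  | φ :: l => .or φ (bigOr l)

/-- An injective numerical code of formulas, used to fix a canonical ordering. -/
def fcode {n : ℕ} : Formula n → ℕ
  | .top => Nat.pair 0 0
  | .bot => Nat.pair 1 0
  | .atom q => Nat.pair 2 q
  | .neg φ => Nat.pair 3 (fcode φ)
  | .and φ ψ => Nat.pair 4 (Nat.pair (fcode φ) (fcode ψ))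
  | .or φ ψ => Nat.pair 5 (Nat.pair (fcode φ) (fcode ψ))
  | .D B φ => Nat.pair 6 (Nat.pair (B.1.sum fun i => 2 ^ (i : ℕ)) (fcode φ))

/-- Insert a formula into a strictly `fcode`-sorted list (dropping duplicates). -/
def insertF {n : ℕ} (φ : Formula n) : List (Formula n) → List (Formula n)
  | [] => [φ]
  | ψ :: l =>
      if fcode φ < fcode ψ then φ :: ψ :: l
      else if fcode φ = fcode ψ then ψ :: l
      else ψ :: insertF φ l

/-- The canonical (sorted, duplicate-free) list representing the set of formulas in `l`. -/
def normList {n : ℕ} (l : List (Formula n)) : List (Formula n) := l.foldr insertF []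

/-- The minterm of `P` that is positive exactly on `S`. -/
def minterm {n : ℕ} (P S : Finset ℕ) : Formula n :=
  bigAnd ((P.sort (· ≤ ·)).map fun q =>
    if q ∈ S then Formula.atom q else Formula.neg (Formula.atom q))

/-- The subset of `Fin n` whose characteristic bits are those of `m`. -/
def natToFinset (n m : ℕ) : Finset (Fin n) :=
  Finset.univ.filter fun i => m.testBit (i : ℕ)

/-- A canonical enumeration of all nonempty subsets of the agent set. -/
def neSubsets (n : ℕ) : List {B : Finset (Fin n) // B.Nonempty} :=
  ((List.range (2 ^ n)).map (natToFinset n)).filterMap fun B =>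
    if h : B.Nonempty then some ⟨B, h⟩ else none

/-- `∇_B Φ = D_B (⋁Φ) ∧ ⋀_{φ ∈ Φ} ¬ D_B ¬ φ`. -/
def nabla {n : ℕ} (B : {B : Finset (Fin n) // B.Nonempty}) (Φ : List (Formula n)) : Formula n :=
  Formula.and (Formula.D B (bigOr Φ))
    (bigAnd (Φ.map fun φ => Formula.neg (Formula.D B (Formula.neg φ))))

/-- Underlying data of a d-canonical formula: a set of (positive) atoms together with,
for every set `B` of agents, a list of successor data. -/
inductive CData (n : ℕ) : Type
  | mk (S : Finset ℕ) (succ : Finset (Fin n) → List (CData n)) : CData n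

/-- The positive-atom component. -/
def CData.S {n : ℕ} : CData n → Finset ℕ
  | mk S _ => S

/-- The `B`-successor data. -/
def CData.succ {n : ℕ} : CData n → Finset (Fin n) → List (CData n)
  | mk _ f => f

/-- The d-canonical formula of depth `k` over `P` determined by the data `d`:
`δ_0 ∧ ⋀_{B} ∇_B Φ_B`. -/
def toFormula {n : ℕ} (P : Finset ℕ) : ℕ → CData n → Formula n
  | 0, d => minterm P (d.S ∩ P)
  | (k+1), d =>
      Formula.and (minterm P (d.S ∩ P))
        (bigAnd ((neSubsets n).map fun B =>
          nabla B (normList ((d.succ B.1).map fun c => toFormula P k c))))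

/-- `D^P_k`: the set of d-canonical formulas of depth `k` over `P`. -/
def DP {n : ℕ} (P : Finset ℕ) (k : ℕ) : Set (Formula n) := Set.range (toFormula P k)

/-- `R_B(δ)` for `δ` the level-`k` canonical formula with data `d`:
the set of `B`-successor canonical formulas (of level `k - 1`). -/
def RBset {n : ℕ} (P : Finset ℕ) (k : ℕ) (d : CData n) (B : Finset (Fin n)) :
    Set (Formula n) :=
  {φ | ∃ c ∈ d.succ B, φ = toFormula P (k - 1) c}

/-- One pruning step `δ ↦ δ^↓` on data (first argument: the level of the input). -/
def downD {n : ℕ} : ℕ → CData n → CData n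
  | 0, d => d
  | 1, d => CData.mk d.S (fun _ => [])
  | (k+2), d => CData.mk d.S (fun B => (d.succ B).map fun c => downD (k+1) c)

/-- `l`-fold pruning `δ ↦ δ^{↓l}` on data (first argument: the level of the input). -/
def downIter {n : ℕ} : ℕ → ℕ → CData n → CData n
  | _, 0, d => d
  | k, (l+1), d => downIter (k-1) l (downD k d)

/-- Truncation `δ ↦ δ^{↑l}` on data (first argument: the level of the input). -/
def upD {n : ℕ} : ℕ → ℕ → CData n → CData n
  | _, 0, d => CData.mk d.S (fun _ => [])
  | 0, (_+1), d => d
  | (k+1), (l+1), d => CData.mk d.S (fun B => (d.succ B).map fun c => upD k l c)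

/-- The canonical formula `δ` of level `k` with data `d`. -/
def cf {n : ℕ} (P : Finset ℕ) (k : ℕ) (d : CData n) : Formula n := toFormula P k d

/-- `δ^{↓l}` (a canonical formula of level `k - l`). -/
def cfDown {n : ℕ} (P : Finset ℕ) (k l : ℕ) (d : CData n) : Formula n :=
  toFormula P (k - l) (downIter k l d)

/-- `δ^{↑l}` (a canonical formula of level `min k l`). -/
def cfUp {n : ℕ} (P : Finset ℕ) (k l : ℕ) (d : CData n) : Formula n :=
  toFormula P (min k l) (upD k l d)

/-- Literal elimination: `φ^p` replaces every occurrence of `¬p` by `⊤` and subsequently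
every remaining occurrence of `p` by `⊤`. -/
def elim {n : ℕ} (p : ℕ) : Formula n → Formula n
  | .top => .top
  | .bot => .bot
  | .atom q => if q = p then .top else .atom q
  | .neg (.atom q) => if q = p then .top else .neg (.atom q)
  | .neg φ => .neg (elim p φ)
  | .and φ ψ => .and (elim p φ) (elim p ψ)
  | .or φ ψ => .or (elim p φ) (elim p ψ)
  | .D B φ => .D B (elim p φ)


/-!
A pointed `L`-model `(M, s)` of `φ` satisfies exactly one d-canonical formula `δ` of depth `dep φ`
over `P`. This `δ` fixes the truth value of every formula over `P` of depth at most `dep φ`, so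
`δ ⊨ φ`, `δ ∈ Δ`, and `s ⊨ δ^p`; hence `φ ⊨ ⋁ Δ^p`.

Conversely, let `(M', s') ⊨ δ^p` for some `δ ∈ Δ` true at a pointed `L`-model `(N, u)`. Unfolding
`N` and `M'` side by side, level by level, gives an `L`-model in which `δ` holds at a world that is
`p`-bisimilar to `(M', s')`: the remainders `δ^p` of the successor descriptions are exactly what
keeps the two unfoldings in step. As `δ ⊨ φ`, every `p`-free consequence of `φ` holds at that world,
and therefore at `s'`.
-/

section Enumeration

variable {n : ℕ}

lemma natToFinset_sum_two_pow (B : Finset (Fin n)) :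
    natToFinset n (∑ i ∈ B, 2 ^ (i : ℕ)) = B := by
  have h := Finset.toFinset_bitIndices_sum_two_pow (B.map Fin.valEmbedding)
  simp only [Finset.sum_map, Fin.valEmbedding_apply] at h
  ext i
  rw [natToFinset, Finset.mem_filter, ← Nat.mem_bitIndices, ← List.mem_toFinset, h]
  simp [Fin.val_inj]

lemma sum_two_pow_lt (B : Finset (Fin n)) : ∑ i ∈ B, 2 ^ (i : ℕ) < 2 ^ n := by
  simpa using Nat.geomSum_lt le_rfl (s := B.map Fin.valEmbedding) (n := n) (by simp)

lemma mem_neSubsets (B : {B : Finset (Fin n) // B.Nonempty}) : B ∈ neSubsets n := by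
  rw [neSubsets, List.mem_filterMap]
  refine ⟨B.1, List.mem_map.2 ⟨_, List.mem_range.2 (sum_two_pow_lt B.1), ?_⟩, dif_pos B.2⟩
  exact natToFinset_sum_two_pow B.1

@[simp] lemma forall_mem_neSubsets {Q : {B : Finset (Fin n) // B.Nonempty} → Prop} :
    (∀ B ∈ neSubsets n, Q B) ↔ ∀ B, Q B :=
  ⟨fun h B => h B (mem_neSubsets B), fun h B _ => h B⟩

lemma fcode_injective : Function.Injective (fcode (n := n)) := by
  have hB : Function.Injective fun B : Finset (Fin n) => ∑ i ∈ B, 2 ^ (i : ℕ) :=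
    Function.LeftInverse.injective natToFinset_sum_two_pow
  suffices ∀ φ ψ : Formula n, fcode φ = fcode ψ ↔ φ = ψ from fun φ ψ => (this φ ψ).1
  intro φ
  induction φ <;> intro ψ <;> cases ψ <;>
    simp_all [fcode, Nat.pair_eq_pair, hB.eq_iff, Subtype.coe_inj]

lemma mem_insertF {φ ψ : Formula n} {l : List (Formula n)} :
    ψ ∈ insertF φ l ↔ ψ = φ ∨ ψ ∈ l := by
  induction l with
  | nil => simp [insertF]
  | cons a l ih =>
    rw [insertF]
    split_ifs with hlt heq
    · simp
    · simp [fcode_injective heq]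
    · simp [ih, or_left_comm]

lemma mem_normList {φ : Formula n} {l : List (Formula n)} : φ ∈ normList l ↔ φ ∈ l := by
  induction l with
  | nil => simp [normList]
  | cons a l ih => simp [normList, mem_insertF, ← ih]

lemma pairwise_insertF (φ : Formula n) {l : List (Formula n)}
    (hl : l.Pairwise (fcode · < fcode ·)) : (insertF φ l).Pairwise (fcode · < fcode ·) := by
  induction l with
  | nil => simp [insertF]
  | cons a l ih =>
    rw [List.pairwise_cons] at hl
    rw [insertF]
    split_ifs with hlt heq
    · exact List.pairwise_cons.2 ⟨fun b hb => by
        rcases List.mem_cons.1 hb with rfl | hb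
        exacts [hlt, hlt.trans (hl.1 b hb)], List.pairwise_cons.2 hl⟩
    · exact List.pairwise_cons.2 hl
    · refine List.pairwise_cons.2 ⟨fun b hb => ?_, ih hl.2⟩
      rcases mem_insertF.1 hb with rfl | hb
      exacts [by omega, hl.1 b hb]

lemma pairwise_normList (l : List (Formula n)) : (normList l).Pairwise (fcode · < fcode ·) := by
  induction l with
  | nil => simp [normList]
  | cons a l ih => exact pairwise_insertF a ih

lemma normList_eq_of_mem_iff {l₁ l₂ : List (Formula n)} (h : ∀ φ, φ ∈ l₁ ↔ φ ∈ l₂) :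
    normList l₁ = normList l₂ := by
  have : Std.Irrefl fun φ ψ : Formula n => fcode φ < fcode ψ := ⟨fun _ => lt_irrefl _⟩
  have : Std.Antisymm fun φ ψ : Formula n => fcode φ < fcode ψ :=
    ⟨fun _ _ h h' => absurd (h.trans h') (lt_irrefl _)⟩
  exact (pairwise_normList l₁).eq_of_mem_iff (pairwise_normList l₂) fun φ => by
    rw [mem_normList, mem_normList, h]

end Enumeration

section Canonical

variable {n : ℕ} {P : Finset ℕ} {p : ℕ}

lemma elim_bigAnd (l : List (Formula n)) : elim p (bigAnd l) = bigAnd (l.map (elim p)) := by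
  induction l with
  | nil => rfl
  | cons φ l ih => simp [bigAnd, elim, ih]

lemma elim_bigOr (l : List (Formula n)) : elim p (bigOr l) = bigOr (l.map (elim p)) := by
  induction l with
  | nil => rfl
  | cons φ l ih => simp [bigOr, elim, ih]

lemma elim_neg_of_ne_atom {φ : Formula n} (h : ∀ q, φ ≠ .atom q) :
    elim p (.neg φ) = .neg (elim p φ) := by
  cases φ <;> simp_all [elim]

lemma elim_nabla (B : {B : Finset (Fin n) // B.Nonempty}) {l : List (Formula n)}
    (h : ∀ φ ∈ l, ∀ q, φ ≠ .atom q) : elim p (nabla B l) = nabla B (l.map (elim p)) := by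
  simp only [nabla, elim, elim_bigOr, elim_bigAnd, List.map_map]
  congr 2
  refine List.map_congr_left fun φ hφ => ?_
  simp [elim, elim_neg_of_ne_atom (h φ hφ)]

lemma toFormula_ne_atom (k : ℕ) (d : CData n) (q : ℕ) : toFormula P k d ≠ .atom q := by
  cases k with
  | zero =>
    rw [toFormula, minterm]
    generalize List.map _ _ = l
    cases l <;> simp [bigAnd]
  | succ k => simp [toFormula]

lemma atoms_bigAnd_subset {l : List (Formula n)} {S : Finset ℕ} (h : ∀ φ ∈ l, φ.atoms ⊆ S) :
    (bigAnd l).atoms ⊆ S := by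
  induction l with
  | nil => simp [bigAnd, Formula.atoms]
  | cons φ l ih => simp_all [bigAnd, Formula.atoms, Finset.union_subset_iff]

lemma atoms_bigOr_subset {l : List (Formula n)} {S : Finset ℕ} (h : ∀ φ ∈ l, φ.atoms ⊆ S) :
    (bigOr l).atoms ⊆ S := by
  induction l with
  | nil => simp [bigOr, Formula.atoms]
  | cons φ l ih => simp_all [bigOr, Formula.atoms, Finset.union_subset_iff]

lemma atoms_minterm (P S : Finset ℕ) : (minterm (n := n) P S).atoms ⊆ P := by
  refine atoms_bigAnd_subset ?_
  simp only [List.mem_map, Finset.mem_sort]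
  rintro _ ⟨q, hq, rfl⟩
  split <;> simpa [Formula.atoms]

lemma atoms_toFormula (k : ℕ) (d : CData n) : (toFormula P k d).atoms ⊆ P := by
  induction k generalizing d with
  | zero => exact atoms_minterm P _
  | succ k ih =>
    refine Finset.union_subset (atoms_minterm P _) (atoms_bigAnd_subset ?_)
    simp only [List.mem_map]
    rintro _ ⟨B, -, rfl⟩
    have hsucc : ∀ φ ∈ normList ((d.succ B.1).map (toFormula P k)), φ.atoms ⊆ P := by
      simp only [mem_normList, List.mem_map]
      rintro _ ⟨c, -, rfl⟩
      exact ih c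
    refine Finset.union_subset (atoms_bigOr_subset hsucc) (atoms_bigAnd_subset ?_)
    simp only [List.mem_map]
    rintro _ ⟨φ, hφ, rfl⟩
    exact hsucc φ hφ

lemma atoms_elim (φ : Formula n) : (elim p φ).atoms ⊆ φ.atoms.erase p := by
  induction φ with
  | top | bot => simp [elim, Formula.atoms]
  | atom q => by_cases h : q = p <;> simp [elim, Formula.atoms, h]
  | neg φ ih =>
    by_cases hφ : ∃ q, φ = .atom q
    · obtain ⟨q, rfl⟩ := hφ
      by_cases h : q = p <;> simp [elim, Formula.atoms, h]
    · rw [elim_neg_of_ne_atom fun q hq => hφ ⟨q, hq⟩]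
      exact ih
  | and φ ψ ihφ ihψ | or φ ψ ihφ ihψ =>
    rw [Formula.atoms, Finset.erase_union_distrib]
    exact Finset.union_subset_union ihφ ihψ
  | D B φ ih => exact ih

lemma toFormula_succ_congr {k : ℕ} {d d' : CData n} (hS : d.S ∩ P = d'.S ∩ P)
    (hsucc : ∀ (B : {B : Finset (Fin n) // B.Nonempty}) φ,
      φ ∈ (d.succ B.1).map (toFormula P k) ↔ φ ∈ (d'.succ B.1).map (toFormula P k)) :
    toFormula P (k + 1) d = toFormula P (k + 1) d' := by
  simp only [toFormula, hS]
  congr 2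
  exact List.map_congr_left fun B _ => congrArg _ (normList_eq_of_mem_iff (hsucc B))

lemma finite_range_of_factorsThrough {α β γ : Type*} {f : α → β} {g : α → γ}
    (hg : (Set.range g).Finite) (hfg : Function.FactorsThrough f g) : (Set.range f).Finite := by
  rcases isEmpty_or_nonempty α with hα | ⟨⟨a⟩⟩
  · simp [Set.range_eq_empty]
  refine (hg.image (Function.extend g f fun _ => f a)).subset ?_
  rintro _ ⟨x, rfl⟩
  exact ⟨g x, ⟨x, rfl⟩, hfg.extend_apply _ x⟩

lemma finite_DP (P : Finset ℕ) (k : ℕ) : (DP (n := n) P k).Finite := by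
  induction k with
  | zero =>
    refine ((P.powerset : Set (Finset ℕ)).toFinite.image (minterm P)).subset ?_
    rintro _ ⟨d, rfl⟩
    exact ⟨d.S ∩ P, by simp, rfl⟩
  | succ k ih =>
    let shape (d : CData n) : Finset ℕ × (Finset (Fin n) → Set (Formula n)) :=
      (d.S ∩ P, fun B => {φ | φ ∈ (d.succ B).map (toFormula P k)})
    have hshape : (Set.range shape).Finite := by
      refine (P.powerset.finite_toSet.prod (Set.Finite.pi fun _ => ih.powerset)).subset ?_
      rintro _ ⟨d, rfl⟩
      refine ⟨Finset.mem_coe.2 (Finset.mem_powerset.2 Finset.inter_subset_right), fun B _ => ?_⟩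
      intro φ hφ
      obtain ⟨c, -, rfl⟩ := List.mem_map.1 hφ
      exact ⟨c, rfl⟩
    refine finite_range_of_factorsThrough hshape fun d d' h => ?_
    simp only [shape, Prod.mk.injEq, funext_iff, Set.ext_iff, Set.mem_ofPred_eq] at h
    exact toFormula_succ_congr h.1 fun B => h.2 B.1

end Canonical

section Semantics

variable {n : ℕ} {W : Type} {M : KModel n W} {s : W} {P : Finset ℕ} {p : ℕ}

@[simp] lemma sat_neg {φ : Formula n} : Sat M s (.neg φ) ↔ ¬ Sat M s φ := Iff.rfl

@[simp] lemma sat_and {φ ψ : Formula n} : Sat M s (.and φ ψ) ↔ Sat M s φ ∧ Sat M s ψ := Iff.rfl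

@[simp] lemma sat_or {φ ψ : Formula n} : Sat M s (.or φ ψ) ↔ Sat M s φ ∨ Sat M s ψ := Iff.rfl

@[simp] lemma sat_D {B : {B : Finset (Fin n) // B.Nonempty}} {φ : Formula n} :
    Sat M s (.D B φ) ↔ ∀ t, M.RB B.1 s t → Sat M t φ := Iff.rfl

@[simp] lemma sat_bigAnd {l : List (Formula n)} : Sat M s (bigAnd l) ↔ ∀ φ ∈ l, Sat M s φ := by
  induction l with
  | nil => simp [bigAnd, Sat]
  | cons φ l ih => simp [bigAnd, ih]

@[simp] lemma sat_bigOr {l : List (Formula n)} : Sat M s (bigOr l) ↔ ∃ φ ∈ l, Sat M s φ := by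
  induction l with
  | nil => simp [bigOr, Sat]
  | cons φ l ih => simp [bigOr, ih]

lemma sat_nabla {B : {B : Finset (Fin n) // B.Nonempty}} {l : List (Formula n)} :
    Sat M s (nabla B l) ↔
      (∀ t, M.RB B.1 s t → ∃ φ ∈ l, Sat M t φ) ∧ ∀ φ ∈ l, ∃ t, M.RB B.1 s t ∧ Sat M t φ := by
  simp [nabla]

lemma sat_minterm {S : Finset ℕ} : Sat M s (minterm P S) ↔ ∀ q ∈ P, (q ∈ M.V s ↔ q ∈ S) := by
  simp only [minterm, sat_bigAnd, List.forall_mem_map, Finset.mem_sort]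
  refine forall₂_congr fun q _ => ?_
  split_ifs with h <;> simp [Sat, h]

lemma sat_elim_minterm {S : Finset ℕ} :
    Sat M s (elim p (minterm P S)) ↔ ∀ q ∈ P, q ≠ p → (q ∈ M.V s ↔ q ∈ S) := by
  simp only [minterm, elim_bigAnd, sat_bigAnd, List.forall_mem_map, Finset.mem_sort]
  refine forall₂_congr fun q _ => ?_
  by_cases hq : q = p <;> split_ifs with h <;> simp [Sat, elim, h, hq]

lemma sat_toFormula_succ {k : ℕ} {d : CData n} :
    Sat M s (toFormula P (k + 1) d) ↔ Sat M s (minterm P (d.S ∩ P)) ∧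
      ∀ B : {B : Finset (Fin n) // B.Nonempty},
        (∀ t, M.RB B.1 s t → ∃ c ∈ d.succ B.1, Sat M t (toFormula P k c)) ∧
        ∀ c ∈ d.succ B.1, ∃ t, M.RB B.1 s t ∧ Sat M t (toFormula P k c) := by
  rw [toFormula, sat_and, sat_bigAnd, List.forall_mem_map, forall_mem_neSubsets]
  simp only [sat_nabla, mem_normList, List.mem_map, exists_exists_and_eq_and, forall_exists_index,
    and_imp, forall_apply_eq_imp_iff₂]

lemma sat_elim_toFormula_succ {k : ℕ} {d : CData n} :
    Sat M s (elim p (toFormula P (k + 1) d)) ↔ Sat M s (elim p (minterm P (d.S ∩ P))) ∧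
      ∀ B : {B : Finset (Fin n) // B.Nonempty},
        (∀ t, M.RB B.1 s t → ∃ c ∈ d.succ B.1, Sat M t (elim p (toFormula P k c))) ∧
        ∀ c ∈ d.succ B.1, ∃ t, M.RB B.1 s t ∧ Sat M t (elim p (toFormula P k c)) := by
  have hna : ∀ B : {B : Finset (Fin n) // B.Nonempty},
      ∀ φ ∈ normList ((d.succ B.1).map (toFormula P k)), ∀ q, φ ≠ .atom q := by
    intro B φ hφ q
    obtain ⟨c, -, rfl⟩ := List.mem_map.1 (mem_normList.1 hφ)
    exact toFormula_ne_atom k c q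
  rw [toFormula, elim, sat_and, elim_bigAnd, sat_bigAnd, List.map_map, List.forall_mem_map,
    forall_mem_neSubsets]
  simp only [Function.comp_apply, elim_nabla _ (hna _), sat_nabla, mem_normList, List.mem_map,
    exists_exists_and_eq_and, forall_exists_index, and_imp, forall_apply_eq_imp_iff₂]

end Semantics

section Descriptions

variable {n : ℕ} {W T : Type} {P : Finset ℕ} {p : ℕ}

instance : Inhabited (CData n) := ⟨.mk ∅ fun _ => []⟩

open Classical in
/-- A `B`-successor list holds one code for each distinct description of a `B`-successor of `u`;
there are finitely many since `DP P k` is finite. -/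
noncomputable def descData (P : Finset ℕ) (M : KModel n W) : ℕ → W → CData n
  | 0, u => .mk (P.filter (· ∈ M.V u)) fun _ => []
  | k + 1, u => .mk (P.filter (· ∈ M.V u)) fun B =>
      have hfin : ((fun v => toFormula P k (descData P M k v)) '' {v | M.RB B u v}).Finite :=
        (finite_DP P k).subset (by rintro _ ⟨v, -, rfl⟩; exact ⟨_, rfl⟩)
      hfin.toFinset.toList.map (Function.invFun (toFormula P k))

/-- The depth-`k` description of `(M, u)` over `P`: by `toFormula_eq_descF_of_sat`, the only member
of `DP P k` true at `u`. -/
noncomputable def descF (P : Finset ℕ) (M : KModel n W) (k : ℕ) (u : W) : Formula n :=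
  toFormula P k (descData P M k u)

variable {M : KModel n W} {N : KModel n T} {s : W} {u : T}

lemma mem_descData_S {k : ℕ} {q : ℕ} : q ∈ (descData P N k u).S ↔ q ∈ P ∧ q ∈ N.V u := by
  cases k <;> simp [descData, CData.S]

lemma mem_descData_succ {k : ℕ} {B : Finset (Fin n)} {c : CData n} :
    c ∈ (descData P N (k + 1) u).succ B ↔
      ∃ v, N.RB B u v ∧ Function.invFun (toFormula P k) (descF P N k v) = c := by
  simp [descData, CData.succ, descF]

@[simp] lemma toFormula_invFun_descF {k : ℕ} {v : T} :
    toFormula P k (Function.invFun (toFormula P k) (descF P N k v)) = descF P N k v :=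
  Function.invFun_eq ⟨_, rfl⟩

lemma sat_minterm_descData {k : ℕ} :
    Sat M s (minterm P ((descData P N k u).S ∩ P)) ↔ ∀ q ∈ P, (q ∈ M.V s ↔ q ∈ N.V u) := by
  simp only [sat_minterm, Finset.mem_inter, mem_descData_S]
  exact forall₂_congr fun q hq => by simp [hq]

lemma sat_elim_minterm_descData {k : ℕ} :
    Sat M s (elim p (minterm P ((descData P N k u).S ∩ P))) ↔
      ∀ q ∈ P, q ≠ p → (q ∈ M.V s ↔ q ∈ N.V u) := by
  simp only [sat_elim_minterm, Finset.mem_inter, mem_descData_S]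
  exact forall₂_congr fun q hq => by simp [hq]

lemma sat_descF_zero : Sat M s (descF P N 0 u) ↔ ∀ q ∈ P, (q ∈ M.V s ↔ q ∈ N.V u) :=
  sat_minterm_descData

lemma sat_descF_succ {k : ℕ} : Sat M s (descF P N (k + 1) u) ↔
    (∀ q ∈ P, (q ∈ M.V s ↔ q ∈ N.V u)) ∧ ∀ B : {B : Finset (Fin n) // B.Nonempty},
      (∀ t, M.RB B.1 s t → ∃ v, N.RB B.1 u v ∧ Sat M t (descF P N k v)) ∧
      ∀ v, N.RB B.1 u v → ∃ t, M.RB B.1 s t ∧ Sat M t (descF P N k v) := by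
  rw [descF, sat_toFormula_succ, sat_minterm_descData]
  simp only [mem_descData_succ, exists_exists_and_eq_and, forall_exists_index, and_imp,
    forall_apply_eq_imp_iff₂, toFormula_invFun_descF]

lemma sat_elim_descF_zero :
    Sat M s (elim p (descF P N 0 u)) ↔ ∀ q ∈ P, q ≠ p → (q ∈ M.V s ↔ q ∈ N.V u) :=
  sat_elim_minterm_descData

lemma sat_elim_descF_succ {k : ℕ} : Sat M s (elim p (descF P N (k + 1) u)) ↔
    (∀ q ∈ P, q ≠ p → (q ∈ M.V s ↔ q ∈ N.V u)) ∧ ∀ B : {B : Finset (Fin n) // B.Nonempty},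
      (∀ t, M.RB B.1 s t → ∃ v, N.RB B.1 u v ∧ Sat M t (elim p (descF P N k v))) ∧
      ∀ v, N.RB B.1 u v → ∃ t, M.RB B.1 s t ∧ Sat M t (elim p (descF P N k v)) := by
  rw [descF, sat_elim_toFormula_succ, sat_elim_minterm_descData]
  simp only [mem_descData_succ, exists_exists_and_eq_and, forall_exists_index, and_imp,
    forall_apply_eq_imp_iff₂, toFormula_invFun_descF]

lemma valuation_iff_of_sat_descF {k : ℕ} (h : Sat M s (descF P N k u)) :
    ∀ q ∈ P, (q ∈ M.V s ↔ q ∈ N.V u) := by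
  cases k
  exacts [sat_descF_zero.1 h, (sat_descF_succ.1 h).1]

lemma valuation_iff_of_sat_elim_descF {k : ℕ} (h : Sat M s (elim p (descF P N k u))) :
    ∀ q ∈ P, q ≠ p → (q ∈ M.V s ↔ q ∈ N.V u) := by
  cases k
  exacts [sat_elim_descF_zero.1 h, (sat_elim_descF_succ.1 h).1]

lemma sat_descF_self (k : ℕ) (u : T) : Sat N u (descF P N k u) := by
  induction k generalizing u with
  | zero => exact sat_descF_zero.2 fun _ _ => Iff.rfl
  | succ k ih =>
    exact sat_descF_succ.2 ⟨fun _ _ => Iff.rfl, fun B =>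
      ⟨fun t ht => ⟨t, ht, ih t⟩, fun v hv => ⟨v, hv, ih v⟩⟩⟩

lemma sat_elim_descF_of_sat {k : ℕ} (h : Sat M s (descF P N k u)) :
    Sat M s (elim p (descF P N k u)) := by
  induction k generalizing u s with
  | zero => exact sat_elim_descF_zero.2 fun q hq _ => sat_descF_zero.1 h q hq
  | succ k ih =>
    obtain ⟨hval, hsucc⟩ := sat_descF_succ.1 h
    refine sat_elim_descF_succ.2
      ⟨fun q hq _ => hval q hq, fun B => ⟨fun t ht => ?_, fun v hv => ?_⟩⟩
    · obtain ⟨v, hv, hvt⟩ := (hsucc B).1 t ht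
      exact ⟨v, hv, ih hvt⟩
    · obtain ⟨t, ht, hvt⟩ := (hsucc B).2 v hv
      exact ⟨t, ht, ih hvt⟩

theorem sat_iff_of_sat_descF {χ : Formula n} (hχ : χ.atoms ⊆ P) {k : ℕ} (hk : χ.depth ≤ k)
    (h : Sat M s (descF P N k u)) : Sat N u χ ↔ Sat M s χ := by
  induction χ generalizing k u s with
  | top | bot => rfl
  | atom q => exact (valuation_iff_of_sat_descF h q (hχ (Finset.mem_singleton_self q))).symm
  | neg χ ih => exact not_congr (ih hχ hk h)
  | and χ ψ ihχ ihψ | or χ ψ ihχ ihψ =>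
    simp only [Formula.atoms, Finset.union_subset_iff] at hχ
    simp only [Formula.depth, max_le_iff] at hk
    simp only [sat_and, sat_or, ihχ hχ.1 hk.1 h, ihψ hχ.2 hk.2 h]
  | D B χ ih =>
    cases k with
    | zero => exact absurd hk (Nat.not_succ_le_zero _)
    | succ k =>
      have hk : χ.depth ≤ k := Nat.le_of_succ_le_succ hk
      obtain ⟨hforth, hback⟩ := (sat_descF_succ.1 h).2 B
      simp only [sat_D]
      constructor
      · intro hu t ht
        obtain ⟨v, hv, hvt⟩ := hforth t ht
        exact (ih hχ hk hvt).1 (hu v hv)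
      · intro hs v hv
        obtain ⟨t, ht, hvt⟩ := hback v hv
        exact (ih hχ hk hvt).2 (hs t ht)

lemma S_inter_eq_of_sat_toFormula {k : ℕ} {d : CData n} (h : Sat M s (toFormula P k d)) :
    d.S ∩ P = (descData P M k s).S ∩ P := by
  have hval : ∀ q ∈ P, (q ∈ M.V s ↔ q ∈ d.S ∩ P) := by
    cases k
    exacts [sat_minterm.1 h, sat_minterm.1 (sat_toFormula_succ.1 h).1]
  ext q
  by_cases hq : q ∈ P
  · simp [mem_descData_S, hq, ← hval q hq]
  · simp [hq]

theorem toFormula_eq_descF_of_sat {k : ℕ} {d : CData n} (h : Sat M s (toFormula P k d)) :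
    toFormula P k d = descF P M k s := by
  induction k generalizing d s with
  | zero => exact congrArg (minterm P) (S_inter_eq_of_sat_toFormula h)
  | succ k ih =>
    refine toFormula_succ_congr (S_inter_eq_of_sat_toFormula h) fun B φ => ?_
    obtain ⟨hforth, hback⟩ := (sat_toFormula_succ.1 h).2 B
    simp only [List.mem_map, mem_descData_succ, exists_exists_and_eq_and, toFormula_invFun_descF]
    constructor
    · rintro ⟨c, hc, rfl⟩
      obtain ⟨t, ht, hct⟩ := hback c hc
      exact ⟨t, ht, (ih hct).symm⟩
    · rintro ⟨v, hv, rfl⟩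
      obtain ⟨c, hc, hcv⟩ := hforth v hv
      exact ⟨c, hc, ih hcv⟩

end Descriptions

theorem CollPBisim.sat_iff {n : ℕ} {W W' : Type} {M : KModel n W} {M' : KModel n W'} {s : W}
    {s' : W'} {p : ℕ} (h : CollPBisim M s M' s' p) {χ : Formula n} (hχ : p ∉ χ.atoms) :
    Sat M s χ ↔ Sat M' s' χ := by
  obtain ⟨ρ, hss', hρ⟩ := h
  induction χ generalizing s s' with
  | top | bot => rfl
  | atom q => exact (hρ s s' hss').1 q fun hq => hχ (by simp [Formula.atoms, hq])
  | neg χ ih => exact not_congr (ih hχ hss')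
  | and χ ψ ihχ ihψ | or χ ψ ihχ ihψ =>
    simp only [Formula.atoms, Finset.mem_union, not_or] at hχ
    simp only [sat_and, sat_or, ihχ hχ.1 hss', ihψ hχ.2 hss']
  | D B χ ih =>
    obtain ⟨-, hforth, hback⟩ := hρ s s' hss'
    simp only [sat_D]
    constructor
    · intro hs t' ht'
      obtain ⟨t, ht, htt'⟩ := hback B.1 B.2 t' ht'
      exact (ih hχ htt').1 (hs t ht)
    · intro hs' t ht
      obtain ⟨t', ht', htt'⟩ := hforth B.1 B.2 t ht
      exact (ih hχ htt').2 (hs' t' ht')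

section Link

variable {n : ℕ} {WN W' : Type} (P : Finset ℕ) (p : ℕ) (N : KModel n WN) (M' : KModel n W')

structure Link where
  src : WN
  tgt : W'
  level : ℕ
  sat_elim : Sat M' tgt (elim p (descF P N level src))

/-- Levels decrease along the relations, level-`0` worlds continue into `M'`, and the disjunct
`y = x` supplies the loops that reflexivity needs. The atom `p` is valued as in `N`, all others as
in `M'`. -/
def linkModel : KModel n (Link P p N M' ⊕ W') where
  R i
    | .inl x, .inl y => N.R i x.src y.src ∧ M'.R i x.tgt y.tgt ∧ (y.level + 1 = x.level ∨ y = x)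
    | .inl x, .inr t => x.level = 0 ∧ M'.R i x.tgt t
    | .inr _, .inl _ => False
    | .inr t, .inr t' => M'.R i t t'
  V
    | .inl x => {q | if q = p then p ∈ N.V x.src else q ∈ M'.V x.tgt}
    | .inr t => M'.V t

variable {P p N M'} {B : Finset (Fin n)}

lemma linkModel_RB_inl_inl (hB : B.Nonempty) {x y : Link P p N M'} :
    (linkModel P p N M').RB B (.inl x) (.inl y) ↔
      N.RB B x.src y.src ∧ M'.RB B x.tgt y.tgt ∧ (y.level + 1 = x.level ∨ y = x) := by
  obtain ⟨i, hi⟩ := hB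
  exact ⟨fun h => ⟨fun j hj => (h j hj).1, fun j hj => (h j hj).2.1, (h i hi).2.2⟩,
    fun ⟨hN, hM', hlev⟩ j hj => ⟨hN j hj, hM' j hj, hlev⟩⟩

lemma linkModel_RB_inl_inr (hB : B.Nonempty) {x : Link P p N M'} {t : W'} :
    (linkModel P p N M').RB B (.inl x) (.inr t) ↔ x.level = 0 ∧ M'.RB B x.tgt t := by
  obtain ⟨i, hi⟩ := hB
  exact ⟨fun h => ⟨(h i hi).1, fun j hj => (h j hj).2⟩, fun ⟨h0, hM'⟩ j hj => ⟨h0, hM' j hj⟩⟩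

lemma Link.exists_succ {x : Link P p N M'} {a : ℕ} (ha : x.level = a + 1)
    (B : {B : Finset (Fin n) // B.Nonempty}) :
    (∀ t, M'.RB B.1 x.tgt t → ∃ y : Link P p N M',
      (linkModel P p N M').RB B.1 (.inl x) (.inl y) ∧ y.tgt = t ∧ y.level = a) ∧
    ∀ v, N.RB B.1 x.src v → ∃ y : Link P p N M',
      (linkModel P p N M').RB B.1 (.inl x) (.inl y) ∧ y.src = v ∧ y.level = a := by
  have hx := x.sat_elim
  rw [ha] at hx
  obtain ⟨hforth, hback⟩ := (sat_elim_descF_succ.1 hx).2 B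
  constructor
  · intro t ht
    obtain ⟨v, hv, hvt⟩ := hforth t ht
    exact ⟨⟨v, t, a, hvt⟩, (linkModel_RB_inl_inl B.2).2 ⟨hv, ht, .inl ha.symm⟩, rfl, rfl⟩
  · intro v hv
    obtain ⟨t, ht, hvt⟩ := hback v hv
    exact ⟨⟨v, t, a, hvt⟩, (linkModel_RB_inl_inl B.2).2 ⟨hv, ht, .inl ha.symm⟩, rfl, rfl⟩

lemma linkModel_valuation_iff (x : Link P p N M') {q : ℕ} (hq : q ∈ P) :
    q ∈ (linkModel P p N M').V (.inl x) ↔ q ∈ N.V x.src := by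
  by_cases hqp : q = p
  · subst hqp
    simp [linkModel]
  · simpa [linkModel, hqp] using valuation_iff_of_sat_elim_descF x.sat_elim q hq hqp

theorem sat_linkModel_descF (j : ℕ) (x : Link P p N M') (hj : j ≤ x.level) :
    Sat (linkModel P p N M') (.inl x) (descF P N j x.src) := by
  induction j generalizing x with
  | zero => exact sat_descF_zero.2 fun q => linkModel_valuation_iff x
  | succ j ih =>
    obtain ⟨a, ha⟩ : ∃ a, x.level = a + 1 := Nat.exists_eq_add_one.2 (by omega)
    refine sat_descF_succ.2 ⟨fun q => linkModel_valuation_iff x, fun B => ⟨?_, fun v hv => ?_⟩⟩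
    · rintro (y | t) hxy
      · obtain ⟨hN, -, hlev⟩ := (linkModel_RB_inl_inl B.2).1 hxy
        exact ⟨y.src, hN, ih y (by rcases hlev with h | rfl <;> omega)⟩
      · exact absurd ((linkModel_RB_inl_inr B.2).1 hxy).1 (by omega)
    · obtain ⟨y, hxy, rfl, hy⟩ := (x.exists_succ ha B).2 v hv
      exact ⟨.inl y, hxy, ih y (by omega)⟩

theorem collPBisim_linkModel (x : Link P p N M') :
    CollPBisim (linkModel P p N M') (.inl x) M' x.tgt p := by
  refine ⟨fun z t => Sum.elim Link.tgt id z = t, rfl, ?_⟩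
  rintro z _ rfl
  refine ⟨fun q hq => ?_, fun B _ y hy => ⟨_, fun i hi => ?_, rfl⟩, fun B hB t ht => ?_⟩
  · rcases z with x | t
    · simp [linkModel, hq]
    · rfl
  · have := hy i hi
    rcases z with x | t <;> rcases y with y | t' <;> simp_all [linkModel]
  · rcases z with x | t₀
    · rcases Nat.eq_zero_or_eq_succ_pred x.level with h0 | ha
      · exact ⟨.inr t, (linkModel_RB_inl_inr hB).2 ⟨h0, ht⟩, rfl⟩
      · obtain ⟨y, hxy, rfl, -⟩ := (x.exists_succ ha ⟨B, hB⟩).1 t ht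
        exact ⟨.inl y, hxy, rfl⟩
    · exact ⟨.inr t, ht, rfl⟩

theorem isModel_linkModel {L : MSys} (hL : L = .K ∨ L = .D ∨ L = .T) (hN : IsModel L N)
    (hM' : IsModel L M') : IsModel L (linkModel P p N M') := by
  rcases hL with rfl | rfl | rfl
  · trivial
  · rintro i (x | t)
    · rcases Nat.eq_zero_or_eq_succ_pred x.level with h0 | ha
      · obtain ⟨t, ht⟩ := hM' i x.tgt
        exact ⟨.inr t, h0, ht⟩
      · obtain ⟨v, hv⟩ := hN i x.src
        obtain ⟨y, hxy, -⟩ := (x.exists_succ ha ⟨{i}, Finset.singleton_nonempty i⟩).2 v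
          (by simpa [KModel.RB] using hv)
        exact ⟨.inl y, hxy i (Finset.mem_singleton_self i)⟩
    · obtain ⟨t', ht'⟩ := hM' i t
      exact ⟨.inr t', ht'⟩
  · rintro i (x | t)
    exacts [⟨hN i x.src, hM' i x.tgt, .inr rfl⟩, hM' i t]

end Link

section UniformInterpolation

variable {n : ℕ} {L : MSys} {P : Finset ℕ} {p : ℕ}

theorem exists_collPBisim_of_sat_elim_descF (hL : L = .K ∨ L = .D ∨ L = .T) {WN W' : Type}
    {N : KModel n WN} {M' : KModel n W'} (hN : IsModel L N) (hM' : IsModel L M') {k : ℕ} {u : WN}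
    {s' : W'} (h : Sat M' s' (elim p (descF P N k u))) :
    ∃ (W : Type) (M : KModel n W) (s : W),
      IsModel L M ∧ Sat M s (descF P N k u) ∧ CollPBisim M s M' s' p :=
  ⟨_, linkModel P p N M', .inl ⟨u, s', k, h⟩, isModel_linkModel hL hN hM',
    sat_linkModel_descF k _ le_rfl, collPBisim_linkModel _⟩

theorem isUI_bigOr_elim (hL : L = .K ∨ L = .D ∨ L = .T) {φ : Formula n} (hφ : φ.atoms ⊆ P)
    (hsat : SatL L φ) {Δ : List (Formula n)}
    (hΔ : ∀ δ, δ ∈ Δ ↔ δ ∈ DP P φ.depth ∧ SatL L δ ∧ Entails L δ φ) :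
    IsUI L P p φ (bigOr (Δ.map (elim p))) := by
  have hdesc {W : Type} {M : KModel n W} (hM : IsModel L M) {s : W} (hs : Sat M s φ) :
      descF P M φ.depth s ∈ Δ :=
    (hΔ _).2 ⟨⟨_, rfl⟩, ⟨W, M, s, hM, sat_descF_self _ s⟩,
      fun _ _ _ _ ht => (sat_iff_of_sat_descF hφ le_rfl ht).1 hs⟩
  have hφψ : Entails L φ (bigOr (Δ.map (elim p))) := fun W M hM s hs =>
    sat_bigOr.2 ⟨_, List.mem_map_of_mem (hdesc hM hs), sat_elim_descF_of_sat (sat_descF_self _ s)⟩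
  refine ⟨?_, atoms_bigOr_subset ?_, fun χ hχ => ⟨fun hφχ => ?_, fun hψχ W M hM s hs =>
    hψχ W M hM s (hφψ W M hM s hs)⟩⟩
  · obtain ⟨W, M, s, hM, hs⟩ := hsat
    exact ⟨W, M, s, hM, hφψ W M hM s hs⟩
  · simp only [List.mem_map]
    rintro _ ⟨δ, hδ, rfl⟩
    obtain ⟨d, rfl⟩ := ((hΔ δ).1 hδ).1
    exact (atoms_elim _).trans (Finset.erase_subset_erase p (atoms_toFormula _ d))
  · intro W' M' hM' s' hs'
    obtain ⟨_, hψ, hs'δ⟩ := sat_bigOr.1 hs'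
    obtain ⟨δ, hδ, rfl⟩ := List.mem_map.1 hψ
    obtain ⟨⟨d, rfl⟩, ⟨WN, N, u, hN, hu⟩, hδφ⟩ := (hΔ _).1 hδ
    rw [toFormula_eq_descF_of_sat hu] at hs'δ hδφ
    obtain ⟨W, M, s, hM, hs, hbisim⟩ := exists_collPBisim_of_sat_elim_descF hL hN hM' hs'δ
    exact (hbisim.sat_iff hχ).1 (hφχ W M hM s (hδφ W M hM s hs))

end UniformInterpolation

/-- uniform interpolation for `K_n D`, `D_n D`, and `T_n D`; the uniform
interpolant of `φ` is the disjunction of the remainders of the satisfiable canonical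
formulas of depth `dep(φ)` entailing `φ`. -/
theorem uniform_interpolation_K_D_T {n : ℕ} (L : MSys)
    (hL : L = MSys.K ∨ L = MSys.D ∨ L = MSys.T) :
    HasUIP (n := n) L ∧
    ∀ (P : Finset ℕ) (p : ℕ) (φ : Formula n),
      p ∈ P → φ.atoms ⊆ P → SatL L φ →
      ∀ Δ : List (Formula n),
        (∀ δ : Formula n,
          δ ∈ Δ ↔ (δ ∈ DP P φ.depth ∧ SatL L δ ∧ Entails L δ φ)) →
        IsUI L P p φ (bigOr (Δ.map (elim p))) := by
  refine ⟨fun P p φ _ hφ hsat => ?_, fun P p φ _ hφ hsat Δ hΔ => isUI_bigOr_elim hL hφ hsat hΔ⟩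
  have hfin : {δ | δ ∈ DP P φ.depth ∧ SatL L δ ∧ Entails L δ φ}.Finite :=
    (finite_DP P φ.depth).subset fun _ hδ => hδ.1
  exact ⟨_, isUI_bigOr_elim hL hφ hsat (Δ := hfin.toFinset.toList) fun δ => by
    rw [Finset.mem_toList, Set.Finite.mem_toFinset]
    rfl⟩

end DKLogic
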